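/- arXiv:gr-qc/9702045 — 3 statements merged into one kernel-verified Lean document; each statement's English description precedes it below -/
import Mathlib

section
/- Let f : ℂⁿ → ℂⁿ be analytic with f(0) = 0 and Jacobian A = Df(0) diagonalizable with eigenvalues λ₁,…,λₙ. If the system ẋ = f(x) possesses a non-trivial analytic first integral F (i.e., F is analytic near 0, not identically constant, and ∇F·f = 0), then there exist non-negative integers i₁,…,iₙ, not all zero, such that Σₖ iₖ λₖ = 0. -/
open Filter Topology

section Aux

variable {E : Type*} [NormedAddCommGroup E] [NormedSpace ℂ E]

lemma derivSeries_apply' (p : FormalMultilinearSeries ℂ E ℂ) (d : ℕ) (v u : E) :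
    p.derivSeries d (fun _ => v) u
      = ∑ i : Fin (1 + d), p (1 + d) (Function.update (fun _ ↦ v) i u) := by
  have h0 : p.derivSeries d (fun _ => v) u
      = (p.changeOriginSeries 1 d (fun _ => v)) (Fin.snoc (0 : Fin 0 → E) u) := rfl
  have hsnoc : (Fin.snoc (0 : Fin 0 → E) u) = (fun _ : Fin 1 => u) := by
    funext i
    simp [Fin.snoc]
  rw [h0, hsnoc, FormalMultilinearSeries.changeOriginSeries]
  rw [ContinuousMultilinearMap.sum_apply, ContinuousMultilinearMap.sum_apply]
  have key : ∀ s : { s : Finset (Fin (1 + d)) // s.card = d },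
      (p.changeOriginSeriesTerm 1 d s.1 s.2 (fun _ => v)) (fun _ : Fin 1 => u)
        = p (1 + d) ((s.1).piecewise (fun _ => v) (fun _ => u)) :=
    fun s => p.changeOriginSeriesTerm_apply 1 d s.1 s.2 v u
  rw [Finset.sum_congr rfl (fun s _ => key s)]
  -- now sum over subtype = sum over i
  have hbij : Function.Bijective
      (fun i : Fin (1 + d) => (⟨({i}ᶜ : Finset (Fin (1 + d))), by
        simp [Finset.card_compl]⟩ : { s : Finset (Fin (1 + d)) // s.card = d })) := by
    constructor
    · intro i j hij
      have := Subtype.ext_iff.mp hij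
      exact Finset.singleton_injective (compl_injective this)
    · rintro ⟨s, hs⟩
      have h1 : sᶜ.card = 1 := by
        rw [Finset.card_compl, hs]
        simp
      obtain ⟨a, ha⟩ := Finset.card_eq_one.mp h1
      exact ⟨a, Subtype.ext (by simp [← ha])⟩
  rw [← Fintype.sum_bijective _ hbij _ _ (fun i => rfl)]
  refine Finset.sum_congr rfl fun i _ => ?_
  congr 1
  rw [Finset.piecewise_compl, Finset.piecewise_singleton]


lemma diag_hasFDerivAt (N : ℕ) (T : ContinuousMultilinearMap ℂ (fun _ : Fin N => E) ℂ) (v : E) :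
    HasFDerivAt (fun w => T (fun _ => w))
      ((T.linearDeriv (fun _ => v)).comp
        (ContinuousLinearMap.pi fun _ : Fin N => ContinuousLinearMap.id ℂ E)) v := by
  have hΔ : HasFDerivAt (fun w : E => (fun _ : Fin N => w))
      (ContinuousLinearMap.pi fun _ : Fin N => ContinuousLinearMap.id ℂ E) v :=
    (ContinuousLinearMap.pi fun _ : Fin N => ContinuousLinearMap.id ℂ E).hasFDerivAt
  exact (T.hasFDerivAt (fun _ => v)).comp v hΔ

lemma sum_update_eq_zero {N : ℕ} (T : ContinuousMultilinearMap ℂ (fun _ : Fin N => E) ℂ)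
    (hzero : ∀ w, T (fun _ => w) = 0) (v u : E) :
    ∑ i : Fin N, T (Function.update (fun _ ↦ v) i u) = 0 := by
  have h1 := diag_hasFDerivAt N T v
  have h2 : HasFDerivAt (fun w => T (fun _ : Fin N => w)) (0 : E →L[ℂ] ℂ) v := by
    have : (fun w => T (fun _ : Fin N => w)) = fun _ => (0 : ℂ) := funext hzero
    rw [this]
    exact hasFDerivAt_const 0 v
  have h3 := h1.unique h2
  have h4 := congrArg (fun (L : E →L[ℂ] ℂ) => L u) h3
  simpa [ContinuousMultilinearMap.linearDeriv_apply] using h4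


lemma tendsto_aux {G : Type*} [NormedAddCommGroup G] [NormedSpace ℂ G] (g : E → G) (q : FormalMultilinearSeries ℂ E G)
    (hg : HasFPowerSeriesAt g q 0) (m : ℕ) (v : E)
    (hlow : ∀ k < m, (q k fun _ => v) = 0) :
    Tendsto (fun t : ℂ => (t ^ m)⁻¹ • g (t • v)) (𝓝[≠] 0) (𝓝 (q m fun _ => v)) := by
  have hO := hg.isBigO_sub_partialSum_pow (m + 1)
  obtain ⟨C, hC⟩ := hO.bound
  have hdiag : ∀ (k : ℕ) (t : ℂ), (q k fun _ => t • v) = t ^ k • (q k fun _ => v) := by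
    intro k t
    have := (q k).map_smul_univ (fun _ : Fin k => t) (fun _ => v)
    simpa [Finset.prod_const] using this
  have hps : ∀ t : ℂ, q.partialSum (m + 1) (t • v) = t ^ m • (q m fun _ => v) := by
    intro t
    rw [FormalMultilinearSeries.partialSum, Finset.sum_range_succ]
    rw [Finset.sum_eq_zero fun k hk => by
      rw [hdiag]; rw [hlow k (Finset.mem_range.mp hk)]; simp]
    rw [hdiag, zero_add]
  -- transfer the bound along t ↦ t • v
  have hsmul : Tendsto (fun t : ℂ => t • v) (𝓝 0) (𝓝 0) := by
    have : Tendsto (fun t : ℂ => t • v) (𝓝 0) (𝓝 ((0:ℂ) • v)) :=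
      (continuous_id.smul continuous_const).tendsto 0
    simpa using this
  have hC' : ∀ᶠ t : ℂ in 𝓝 0,
      ‖g (t • v) - t ^ m • (q m fun _ => v)‖ ≤ C * (‖t‖ * ‖v‖) ^ (m + 1) := by
    filter_upwards [hsmul.eventually hC] with t ht
    have := ht
    rw [zero_add, hps] at this
    calc ‖g (t • v) - t ^ m • (q m fun _ => v)‖ ≤ C * ‖‖t • v‖ ^ (m+1)‖ := this
    _ = C * (‖t‖ * ‖v‖) ^ (m+1) := by
        rw [norm_smul]
        rw [Real.norm_of_nonneg (by positivity)]
  rw [← tendsto_sub_nhds_zero_iff]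
  have hbound : ∀ᶠ t : ℂ in 𝓝[≠] 0,
      ‖(t ^ m)⁻¹ • g (t • v) - (q m fun _ => v)‖ ≤ (C * ‖v‖ ^ (m+1)) * ‖t‖ := by
    filter_upwards [eventually_nhdsWithin_of_eventually_nhds hC',
      self_mem_nhdsWithin] with t ht (htne : t ≠ 0)
    have htm : (t : ℂ) ^ m ≠ 0 := pow_ne_zero _ htne
    have heq : (t ^ m)⁻¹ • g (t • v) - (q m fun _ => v)
        = (t ^ m)⁻¹ • (g (t • v) - t ^ m • (q m fun _ => v)) := by
      rw [smul_sub, smul_smul, inv_mul_cancel₀ htm, one_smul]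
    rw [heq, norm_smul, norm_inv, norm_pow]
    have htn : (0:ℝ) < ‖t‖ := norm_pos_iff.mpr htne
    calc (‖t‖ ^ m)⁻¹ * ‖g (t • v) - t ^ m • (q m fun _ => v)‖
        ≤ (‖t‖ ^ m)⁻¹ * (C * (‖t‖ * ‖v‖) ^ (m+1)) := by
          apply mul_le_mul_of_nonneg_left ht (by positivity)
      _ = (‖t‖ ^ m)⁻¹ * ‖t‖ ^ m * (C * ‖t‖ * ‖v‖ ^ (m+1)) := by
          rw [mul_pow, pow_succ]; ring
      _ = C * ‖v‖ ^ (m+1) * ‖t‖ := by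
          rw [inv_mul_cancel₀ (by positivity : (‖t‖:ℝ) ^ m ≠ 0)]; ring
  have htend : Tendsto (fun t : ℂ => (C * ‖v‖ ^ (m+1)) * ‖t‖) (𝓝[≠] (0:ℂ)) (𝓝 0) := by
    have : Tendsto (fun t : ℂ => (C * ‖v‖ ^ (m+1)) * ‖t‖) (𝓝 0) (𝓝 0) := by
      have h0 : Tendsto (fun t : ℂ => ‖t‖) (𝓝 (0:ℂ)) (𝓝 0) := by
        simpa using tendsto_norm_zero
      simpa using h0.const_mul (C * ‖v‖ ^ (m+1))
    exact this.mono_left nhdsWithin_le_nhds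
  exact squeeze_zero_norm' hbound htend


lemma fderiv_sum_single {n : ℕ} (F : (Fin n → ℂ) → ℂ) (x y : Fin n → ℂ) :
    ∑ j : Fin n, y j * fderiv ℂ F x (Pi.single j 1) = fderiv ℂ F x y := by
  have hy : y = ∑ j : Fin n, y j • (Pi.single j (1:ℂ) : Fin n → ℂ) := by
    conv_lhs => rw [← Finset.univ_sum_single y]
    refine Finset.sum_congr rfl fun j _ => ?_
    rw [← Pi.single_smul, smul_eq_mul, mul_one]
  conv_rhs => rw [hy]
  rw [map_sum]
  refine Finset.sum_congr rfl fun j _ => ?_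
  rw [map_smul, smul_eq_mul]

lemma prod_X_eq_monomial {n N : ℕ} (g : Fin N → Fin n) :
    (∏ i : Fin N, (MvPolynomial.X (g i) : MvPolynomial (Fin n) ℂ))
      = MvPolynomial.monomial (∑ i : Fin N, Finsupp.single (g i) 1) 1 := by
  classical
  induction (Finset.univ : Finset (Fin N)) using Finset.induction_on with
  | empty => simp
  | insert _ _ h ih =>
    rw [Finset.prod_insert h, Finset.sum_insert h, ih, MvPolynomial.X,
      MvPolynomial.monomial_mul, one_mul]

lemma poly_part {n N : ℕ} (hN : 0 < N) (lam : Fin n → ℂ)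
    (c : (Fin N → Fin n) → ℂ)
    (hS : ∀ w : Fin n → ℂ, ∑ g : Fin N → Fin n,
      (∑ i : Fin N, lam (g i)) * (c g * ∏ i : Fin N, w (g i)) = 0)
    (hR : ∃ w : Fin n → ℂ, ∑ g : Fin N → Fin n, c g * ∏ i : Fin N, w (g i) ≠ 0) :
    ∃ i : Fin n → ℕ, (∑ k : Fin n, (i k : ℂ) * lam k = 0) ∧ 0 < ∑ k : Fin n, i k := by
  classical
  set α : (Fin N → Fin n) → (Fin n →₀ ℕ) := fun g => ∑ i : Fin N, Finsupp.single (g i) 1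
    with hα
  set Q : MvPolynomial (Fin n) ℂ := ∑ g : Fin N → Fin n,
    MvPolynomial.monomial (α g) ((∑ i : Fin N, lam (g i)) * c g) with hQ
  set R : MvPolynomial (Fin n) ℂ := ∑ g : Fin N → Fin n,
    MvPolynomial.monomial (α g) (c g) with hRdef
  have hmono : ∀ (g : Fin N → Fin n) (a : ℂ),
      (MvPolynomial.monomial (α g) a : MvPolynomial (Fin n) ℂ)
        = MvPolynomial.C a * ∏ i : Fin N, MvPolynomial.X (g i) := by
    intro g a
    rw [prod_X_eq_monomial, MvPolynomial.C_mul_monomial, mul_one]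
  have hQ0 : Q = 0 := by
    apply MvPolynomial.funext
    intro w
    rw [hQ, map_sum, map_zero]
    rw [← hS w]
    refine Finset.sum_congr rfl fun g _ => ?_
    rw [hmono, map_mul, MvPolynomial.eval_C, MvPolynomial.eval_prod]
    simp only [MvPolynomial.eval_X]
    ring
  have hevalR : ∀ w, MvPolynomial.eval w R = ∑ g : Fin N → Fin n, c g * ∏ i, w (g i) := by
    intro w
    rw [hRdef, map_sum]
    refine Finset.sum_congr rfl fun g _ => ?_
    rw [hmono, map_mul, MvPolynomial.eval_C, MvPolynomial.eval_prod]
    simp only [MvPolynomial.eval_X]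
  have hRne : R ≠ 0 := by
    obtain ⟨w, hw⟩ := hR
    intro h
    rw [← hevalR w] at hw
    rw [h] at hw
    simp at hw
  obtain ⟨a, ha⟩ := Finset.nonempty_iff_ne_empty.mpr
    (fun h => hRne (MvPolynomial.support_eq_empty.mp h))
  have haR : MvPolynomial.coeff a R ≠ 0 := MvPolynomial.mem_support_iff.mp ha
  have hcoeffR : MvPolynomial.coeff a R
      = ∑ g : Fin N → Fin n, if α g = a then c g else 0 := by
    rw [hRdef, MvPolynomial.coeff_sum]
    exact Finset.sum_congr rfl fun g _ => MvPolynomial.coeff_monomial a (α g) _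
  have hLa : ∀ g : Fin N → Fin n, α g = a →
      (∑ i : Fin N, lam (g i)) = ∑ k : Fin n, (a k : ℂ) * lam k := by
    intro g hg
    rw [← hg, hα]
    have : ∀ k : Fin n, (((∑ i : Fin N, Finsupp.single (g i) 1 : Fin n →₀ ℕ)) k : ℂ)
        = ∑ i : Fin N, if g i = k then (1:ℂ) else 0 := by
      intro k
      rw [Finsupp.finset_sum_apply]
      push_cast
      refine Finset.sum_congr rfl fun i _ => ?_
      rw [Finsupp.single_apply]
      split <;> simp
    simp only [this]
    symm
    simp only [Finset.sum_mul, ite_mul, one_mul, zero_mul]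
    rw [Finset.sum_comm]
    simp [Finset.sum_ite_eq]
  have hcoeffQ : MvPolynomial.coeff a Q
      = (∑ k : Fin n, (a k : ℂ) * lam k) * MvPolynomial.coeff a R := by
    rw [hQ, MvPolynomial.coeff_sum, hcoeffR, Finset.mul_sum]
    refine Finset.sum_congr rfl fun g _ => ?_
    rw [MvPolynomial.coeff_monomial]
    split
    · rename_i h
      rw [hLa g h]
    · rw [mul_zero]
  have hQa : MvPolynomial.coeff a Q = 0 := by rw [hQ0]; simp
  have hfac : (∑ k : Fin n, (a k : ℂ) * lam k) = 0 := by
    rw [hcoeffQ] at hQa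
    rcases mul_eq_zero.mp hQa with h | h
    · exact h
    · exact absurd h haR
  obtain ⟨g, hg⟩ : ∃ g : Fin N → Fin n, α g = a := by
    by_contra hno
    push_neg at hno
    apply haR
    rw [hcoeffR]
    exact Finset.sum_eq_zero fun g _ => if_neg (hno g)
  refine ⟨fun k => a k, hfac, ?_⟩
  have hdeg : ∑ k : Fin n, a k = N := by
    rw [← hg, hα]
    simp only [Finsupp.finset_sum_apply, Finsupp.single_apply]
    rw [Finset.sum_comm]
    simp [Finset.sum_ite_eq]
  simpa [hdeg] using hN
end Aux

set_option maxHeartbeats 1000000 in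
theorem stmt_0 {n : ℕ} (f : (Fin n → ℂ) → (Fin n → ℂ))
    (hf : AnalyticAt ℂ f 0) (hf0 : f 0 = 0)
    (A : Matrix (Fin n) (Fin n) ℂ)
    (hA : ∀ x, fderiv ℂ f 0 x = A.mulVec x)
    (lam : Fin n → ℂ)
    (hdiag : ∃ P : Matrix (Fin n) (Fin n) ℂ,
      IsUnit P.det ∧ P⁻¹ * A * P = Matrix.diagonal lam)
    (F : (Fin n → ℂ) → ℂ) (hF : AnalyticAt ℂ F 0)
    (hFnc : ¬ ∃ c : ℂ, ∀ᶠ x in 𝓝 (0 : Fin n → ℂ), F x = c)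
    (hint : ∀ᶠ x in 𝓝 (0 : Fin n → ℂ),
      ∑ j : Fin n, f x j * fderiv ℂ F x (Pi.single j 1) = 0) :
    ∃ i : Fin n → ℕ, (∑ k : Fin n, (i k : ℂ) * lam k = 0) ∧ 0 < ∑ k : Fin n, i k := by
  classical
  obtain ⟨P, hPdet, hPD⟩ := hdiag
  obtain ⟨p, hp⟩ := hF
  obtain ⟨r, hpB⟩ := hp
  -- existence of a minimal positive degree with nonzero diagonal coefficient
  have hex : ∃ d, 0 < d ∧ ∃ v, (p d fun _ => v) ≠ 0 := by
    by_contra hcon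
    push_neg at hcon
    apply hFnc
    refine ⟨p 0 (fun _ => 0), ?_⟩
    have hball : EMetric.ball (0 : Fin n → ℂ) r ∈ 𝓝 (0 : Fin n → ℂ) :=
      EMetric.ball_mem_nhds 0 hpB.r_pos
    filter_upwards [hball] with y hy
    have hs := hpB.hasSum hy
    have h0 : HasSum (fun d => p d fun _ => y) (p 0 fun _ => y) :=
      hasSum_single 0 (fun d hd => hcon d (Nat.pos_of_ne_zero hd) y)
    have huniq := hs.unique h0
    rw [zero_add] at huniq
    rw [huniq]
    congr 1
    exact Subsingleton.elim _ _
  set m := Nat.find hex with hmdef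
  have hmspec := Nat.find_spec hex
  rw [← hmdef] at hmspec
  obtain ⟨hmpos, v₀, hv₀⟩ := hmspec
  have hmin : ∀ d, 0 < d → d < m → ∀ v, (p d fun _ => v) = 0 := by
    intro d hd hdm v
    have := Nat.find_min hex hdm
    push_neg at this
    exact this hd v
  obtain ⟨m', hm'⟩ : ∃ m', m = 1 + m' := ⟨m - 1, by omega⟩
  rw [hm'] at hv₀
  have hDlow : ∀ k, k < m' → ∀ v : Fin n → ℂ, p.derivSeries k (fun _ => v) = 0 := by
    intro k hk v
    ext u
    rw [derivSeries_apply']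
    simp only [ContinuousLinearMap.zero_apply]
    exact sum_update_eq_zero _ (fun w => hmin (1+k) (by omega) (by omega) w) v u
  -- the key resonance identity
  have hkey : ∀ v : Fin n → ℂ, (p.derivSeries m' fun _ => v) (A.mulVec v) = 0 := by
    intro v
    have hG : HasFPowerSeriesAt (fderiv ℂ F) p.derivSeries 0 := hpB.fderiv.hasFPowerSeriesAt
    have h1 : Tendsto (fun t : ℂ => (t ^ m')⁻¹ • fderiv ℂ F (t • v)) (𝓝[≠] 0)
        (𝓝 (p.derivSeries m' fun _ => v)) :=
      tendsto_aux _ _ hG m' v (fun k hk => hDlow k hk v)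
    obtain ⟨pf, hpf⟩ := hf
    have hpf0 : (pf 0 fun _ => v) = 0 := by
      have := hpf.coeff_zero (fun _ => v)
      rw [hf0] at this; exact this
    have h2 : Tendsto (fun t : ℂ => (t ^ 1)⁻¹ • f (t • v)) (𝓝[≠] 0)
        (𝓝 (pf 1 fun _ => v)) := by
      refine tendsto_aux _ _ hpf 1 v ?_
      intro k hk
      interval_cases k
      exact hpf0
    have hpf1 : (pf 1 fun _ => v) = A.mulVec v := by
      obtain ⟨rf, hpfB⟩ := hpf
      have h := hpfB.factorial_smul v 1
      rw [iteratedFDeriv_one_apply] at h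
      simp only [Nat.factorial_one, one_smul] at h
      rw [h, hA v]
    rw [hpf1] at h2
    have happ : Tendsto (fun t : ℂ =>
        ((t ^ m')⁻¹ • fderiv ℂ F (t • v)) ((t ^ 1)⁻¹ • f (t • v))) (𝓝[≠] 0)
        (𝓝 ((p.derivSeries m' fun _ => v) (A.mulVec v))) := by
      have hc : Continuous (fun q : ((Fin n → ℂ) →L[ℂ] ℂ) × (Fin n → ℂ) => q.1 q.2) :=
        isBoundedBilinearMap_apply.continuous
      have h3 := hc.tendsto ((p.derivSeries m' fun _ => v), A.mulVec v)
      exact h3.comp (h1.prodMk_nhds h2)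
    have hsm : Tendsto (fun t : ℂ => t • v) (𝓝[≠] (0:ℂ)) (𝓝 0) := by
      have : Tendsto (fun t : ℂ => t • v) (𝓝 0) (𝓝 ((0:ℂ) • v)) :=
        (continuous_id.smul continuous_const).tendsto 0
      simpa using this.mono_left nhdsWithin_le_nhds
    have hz : ∀ᶠ t : ℂ in 𝓝[≠] 0,
        ((t ^ m')⁻¹ • fderiv ℂ F (t • v)) ((t ^ 1)⁻¹ • f (t • v)) = 0 := by
      filter_upwards [hsm.eventually hint] with t ht
      have hFf : fderiv ℂ F (t • v) (f (t • v)) = 0 := by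
        rw [← fderiv_sum_single]
        exact ht
      rw [ContinuousLinearMap.smul_apply, map_smul, hFf]
      simp
    have h0 : Tendsto (fun t : ℂ =>
        ((t ^ m')⁻¹ • fderiv ℂ F (t • v)) ((t ^ 1)⁻¹ • f (t • v))) (𝓝[≠] 0) (𝓝 0) :=
      Tendsto.congr' (by filter_upwards [hz] with t ht using ht.symm) tendsto_const_nhds
    exact tendsto_nhds_unique happ h0
  -- translate to the multilinear identity
  have hkey2 : ∀ v : Fin n → ℂ,
      ∑ i : Fin (1 + m'), p (1 + m') (Function.update (fun _ ↦ v) i (A.mulVec v)) = 0 := by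
    intro v
    rw [← derivSeries_apply']
    exact hkey v
  -- matrix algebra
  set T := p (1 + m') with hT
  set col : Fin n → (Fin n → ℂ) := fun k j => P j k with hcol
  set c : (Fin (1 + m') → Fin n) → ℂ := fun g => T (fun i => col (g i)) with hc
  have hmv : ∀ u : Fin n → ℂ, P.mulVec u = ∑ k : Fin n, u k • col k := by
    intro u
    funext j
    rw [Finset.sum_apply]
    simp only [Pi.smul_apply, hcol, smul_eq_mul]
    rw [Matrix.mulVec, dotProduct]
    exact Finset.sum_congr rfl fun k _ => mul_comm _ _
  have hexp : ∀ d : Fin (1 + m') → (Fin n → ℂ),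
      T (fun i => P.mulVec (d i)) = ∑ g : Fin (1 + m') → Fin n,
        (∏ i, d i (g i)) • c g := by
    intro d
    have h1 : (fun i => P.mulVec (d i)) = fun i => ∑ k : Fin n, d i k • col k :=
      funext fun i => hmv (d i)
    rw [h1]
    have h2 := T.toMultilinearMap.map_sum (α := fun _ : Fin (1 + m') => Fin n)
      (g := fun i k => d i k • col k)
    rw [ContinuousMultilinearMap.coe_coe] at h2
    rw [h2]
    refine Finset.sum_congr rfl fun g _ => ?_
    have h3 := T.toMultilinearMap.map_smul_univ (fun i => d i (g i)) (fun i => col (g i))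
    rw [ContinuousMultilinearMap.coe_coe] at h3
    rw [h3]
  have hAP : A * P = P * Matrix.diagonal lam := by
    have h1 : P * (P⁻¹ * A * P) = P * Matrix.diagonal lam := by rw [hPD]
    calc A * P = P * P⁻¹ * A * P := by rw [Matrix.mul_nonsing_inv P hPdet, Matrix.one_mul]
    _ = P * (P⁻¹ * A * P) := by rw [Matrix.mul_assoc, Matrix.mul_assoc, Matrix.mul_assoc]
    _ = P * Matrix.diagonal lam := h1
  have hAv : ∀ w : Fin n → ℂ, A.mulVec (P.mulVec w) = P.mulVec (fun k => lam k * w k) := by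
    intro w
    have hdw : (Matrix.diagonal lam).mulVec w = fun k => lam k * w k := by
      funext k
      rw [Matrix.mulVec_diagonal]
    rw [Matrix.mulVec_mulVec, hAP, ← Matrix.mulVec_mulVec, hdw]
  -- the polynomial identity input
  have hS : ∀ w : Fin n → ℂ, ∑ g : Fin (1 + m') → Fin n,
      (∑ i : Fin (1 + m'), lam (g i)) * (c g * ∏ i : Fin (1 + m'), w (g i)) = 0 := by
    intro w
    have h0 := hkey2 (P.mulVec w)
    rw [hAv w] at h0
    have h1 : ∀ i : Fin (1 + m'),
        Function.update (fun _ : Fin (1 + m') => P.mulVec w) i (P.mulVec fun k => lam k * w k)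
          = fun i' => P.mulVec ((Function.update (fun _ : Fin (1 + m') => w) i
              (fun k => lam k * w k)) i') := by
      intro i
      funext i'
      by_cases h : i' = i
      · subst h; rw [Function.update_self, Function.update_self]
      · rw [Function.update_of_ne h, Function.update_of_ne h]
    have h2 : ∀ (i : Fin (1 + m')) (g : Fin (1 + m') → Fin n),
        (∏ i' : Fin (1 + m'), (Function.update (fun _ : Fin (1 + m') => w) i
          (fun k => lam k * w k)) i' (g i'))
        = lam (g i) * ∏ i' : Fin (1 + m'), w (g i') := by
      intro i g
      have h3 : (fun i' => (Function.update (fun _ : Fin (1 + m') => w) i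
          (fun k => lam k * w k)) i' (g i'))
          = Function.update (fun i' => w (g i')) i (lam (g i) * w (g i)) := by
        funext i'
        by_cases h : i' = i
        · subst h; rw [Function.update_self, Function.update_self]
        · rw [Function.update_of_ne h, Function.update_of_ne h]
      rw [h3, Finset.prod_update_of_mem (Finset.mem_univ i)]
      rw [Finset.sdiff_singleton_eq_erase, ← Finset.mul_prod_erase Finset.univ _
        (Finset.mem_univ i)]
      ring
    calc ∑ g : Fin (1 + m') → Fin n,
        (∑ i : Fin (1 + m'), lam (g i)) * (c g * ∏ i : Fin (1 + m'), w (g i))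
        = ∑ g : Fin (1 + m') → Fin n, ∑ i : Fin (1 + m'),
            (lam (g i) * ∏ i' : Fin (1 + m'), w (g i')) * c g := by
          refine Finset.sum_congr rfl fun g _ => ?_
          rw [Finset.sum_mul]
          refine Finset.sum_congr rfl fun i _ => ?_
          ring
      _ = ∑ i : Fin (1 + m'), ∑ g : Fin (1 + m') → Fin n,
            (lam (g i) * ∏ i' : Fin (1 + m'), w (g i')) • c g := by
          rw [Finset.sum_comm]
          simp [smul_eq_mul]
      _ = ∑ i : Fin (1 + m'), T (Function.update (fun _ : Fin (1 + m') => P.mulVec w) i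
            (P.mulVec fun k => lam k * w k)) := by
          refine Finset.sum_congr rfl fun i _ => ?_
          rw [h1 i, hexp]
          refine (Finset.sum_congr rfl fun g _ => ?_).symm
          rw [h2 i g]
      _ = 0 := h0
  have hR : ∃ w : Fin n → ℂ, ∑ g : Fin (1 + m') → Fin n,
      c g * ∏ i : Fin (1 + m'), w (g i) ≠ 0 := by
    refine ⟨P⁻¹.mulVec v₀, ?_⟩
    have hPv : P.mulVec (P⁻¹.mulVec v₀) = v₀ := by
      rw [Matrix.mulVec_mulVec, Matrix.mul_nonsing_inv P hPdet, Matrix.one_mulVec]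
    have he := hexp (fun _ => P⁻¹.mulVec v₀)
    rw [hPv] at he
    intro hzero
    apply hv₀
    rw [he]
    rw [← hzero]
    refine Finset.sum_congr rfl fun g _ => ?_
    rw [smul_eq_mul]
    ring
  exact poly_part (by omega) lam c hS hR
end

section
/- The Jacobian matrix of the reduced Bianchi IX vector field F : ℂ⁴ → ℂ⁴ (with components u̇₁ = (1+u₄)(1 + u₁u₂ + u₃(u₁+u₂) − u₄²) − 2u₁u₃, u̇₂ = (1−u₄)(1 + u₁u₂ + u₃(u₁+u₂) − u₄²) − 2u₂u₃, u̇₃ = 2(u₄² − u₃² − 1), u̇₄ = u₄(u₁+u₂−2u₃) + (1/2)(u₁−u₂)(1 − u₁u₂ − u₃(u₁+u₂) + u₄²)) evaluated at the equilibrium point z = (−i, −i, i, 0) has characteristic polynomial (λ + 2i)²(λ + 4i)², i.e., eigenvalues −2i (multiplicity 2) and −4i (multiplicity 2). -/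
open Complex MvPolynomial Polynomial

/-- The components of the reduced Bianchi IX vector field as polynomials in
`u₀, u₁, u₂, u₃` (variables indexed by `Fin 4`). -/
noncomputable def redBianchiIXPoly : Fin 4 → MvPolynomial (Fin 4) ℂ :=
  ![(1 + X 3) * (1 + X 0 * X 1 + X 2 * (X 0 + X 1) - (X 3)^2) - 2 * X 0 * X 2,
    (1 - X 3) * (1 + X 0 * X 1 + X 2 * (X 0 + X 1) - (X 3)^2) - 2 * X 1 * X 2,
    2 * ((X 3)^2 - (X 2)^2 - 1),
    X 3 * (X 0 + X 1 - 2 * X 2)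
      + MvPolynomial.C (1/2 : ℂ) * (X 0 - X 1)
        * (1 - X 0 * X 1 - X 2 * (X 0 + X 1) + (X 3)^2)]

/-- The Jacobian matrix of the reduced Bianchi IX vector field evaluated at
the equilibrium point `z = (-i, -i, i, 0)`. -/
noncomputable def redBianchiIXJacobian : Matrix (Fin 4) (Fin 4) ℂ :=
  fun j k => MvPolynomial.eval ![-I, -I, I, 0] (MvPolynomial.pderiv k (redBianchiIXPoly j))

lemma pderiv_two (k : Fin 4) : (pderiv k) (2 : MvPolynomial (Fin 4) ℂ) = 0 := by
  rw [show (2:MvPolynomial (Fin 4) ℂ) = MvPolynomial.C 2 from (map_ofNat MvPolynomial.C 2).symm,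
    pderiv_C]

set_option maxHeartbeats 2000000 in
lemma jac_eq : redBianchiIXJacobian =
    !![-2*I, 0, 0, 2; 0, -2*I, 0, -2; 0, 0, -4*I, 0; 0, 0, 0, -4*I] := by
  ext j k
  fin_cases j <;> fin_cases k <;>
    · simp only [redBianchiIXJacobian, redBianchiIXPoly]
      simp [pderiv_X, Pi.single_apply, pderiv_two, Matrix.vecHead, Matrix.vecTail]
      all_goals try ring_nf
      all_goals try simp [Complex.I_sq]

theorem stmt_4 :
    redBianchiIXJacobian.charpoly =
      (Polynomial.X + Polynomial.C (2 * I))^2 * (Polynomial.X + Polynomial.C (4 * I))^2 := by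
  rw [jac_eq]
  rw [Matrix.charpoly_of_upperTriangular]
  · simp [Fin.prod_univ_succ]
    ring
  · intro i j h
    fin_cases i <;> fin_cases j <;>
      simp_all [Fin.lt_def, Matrix.vecHead, Matrix.vecTail] <;> omega
end

section
/- Let F : ℂⁿ → ℂⁿ be a polynomial vector field with F(z₀) = 0 at some point z₀, and suppose the eigenvalues λ₁,…,λₙ of DF(z₀) are ℚ-independent in the sense that no non-trivial non-negative integer combination vanishes: Σ iₖλₖ ≠ 0 whenever (i₁,…,iₙ) ∈ ℕⁿ \ {0}. Then any first integral of ẋ = F(x) that is given by a formal power series centered at z₀ is constant (assuming DF(z₀) diagonalizable). -/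
open MvPolynomial


variable {n : ℕ}

/-- linear polynomial given by row k of matrix M -/
noncomputable def linP (M : Matrix (Fin n) (Fin n) ℂ) (k : Fin n) : MvPolynomial (Fin n) ℂ :=
  ∑ l, C (M k l) * X l

/-- Lie derivative along linear vector field A x -/
noncomputable def DA (A : Matrix (Fin n) (Fin n) ℂ) (p : MvPolynomial (Fin n) ℂ) :
    MvPolynomial (Fin n) ℂ :=
  ∑ j, linP A j * pderiv j p

lemma pderiv_linP (M : Matrix (Fin n) (Fin n) ℂ) (k j : Fin n) :
    pderiv j (linP M k) = C (M k j) := by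
  classical
  simp only [linP, map_sum, pderiv_mul, pderiv_C, pderiv_X, zero_mul, zero_add]
  rw [Finset.sum_eq_single j]
  · simp
  · intro b _ hb
    simp [Pi.single_eq_of_ne hb]
  · simp

/-- chain rule for substitutions with constant partial derivatives -/
lemma pderiv_aeval_linear (f : Fin n → MvPolynomial (Fin n) ℂ)
    (M : Matrix (Fin n) (Fin n) ℂ) (hf : ∀ l j, pderiv j (f l) = C (M l j)) (j : Fin n)
    (p : MvPolynomial (Fin n) ℂ) :
    pderiv j (aeval f p) = ∑ l, C (M l j) * aeval f (pderiv l p) := by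
  classical
  induction p using MvPolynomial.induction_on with
  | C a => simp [pderiv_C]
  | add p q hp hq =>
      simp only [map_add, hp, hq, mul_add, ← Finset.sum_add_distrib]
  | mul_X p i hp =>
      simp only [map_mul, aeval_X, pderiv_mul, hp, hf, map_add, mul_add,
        Finset.sum_add_distrib, Finset.sum_mul]
      congr 1
      · exact Finset.sum_congr rfl fun l _ => by ring
      · rw [Finset.sum_eq_single i]
        · simp [mul_comm]
        · intro b _ hb
          simp [Pi.single_eq_of_ne hb.symm]
        · simp

lemma aeval_linP_linP (Q R : Matrix (Fin n) (Fin n) ℂ) (k : Fin n) :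
    aeval (linP Q) (linP R k) = linP (R * Q) k := by
  simp only [linP, map_sum, map_mul, aeval_C, aeval_X, Matrix.mul_apply, algebraMap_eq]
  simp only [Finset.mul_sum, Finset.sum_mul, ← C_mul]
  rw [Finset.sum_comm]
  simp only [C_mul, mul_assoc]

lemma aeval_linP_comp (Q R : Matrix (Fin n) (Fin n) ℂ) (p : MvPolynomial (Fin n) ℂ) :
    aeval (linP Q) (aeval (linP R) p) = aeval (linP (R * Q)) p := by
  rw [show (aeval (linP Q) : MvPolynomial (Fin n) ℂ →ₐ[ℂ] _) ((aeval (linP R)) p)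
      = ((aeval (linP Q)).comp (aeval (linP R))) p from rfl, comp_aeval]
  have h : (fun i => (aeval (linP Q)) (linP R i)) = linP (R * Q) :=
    _root_.funext fun i => aeval_linP_linP Q R i
  rw [h]

lemma linP_one (k : Fin n) : linP (1 : Matrix (Fin n) (Fin n) ℂ) k = X k := by
  classical
  simp only [linP, Matrix.one_apply]
  rw [Finset.sum_eq_single k]
  · simp
  · intro b _ hb; simp [Ne.symm hb]
  · simp

lemma DA_conj (A B Q : Matrix (Fin n) (Fin n) ℂ) (hQ : Q * A = B * Q)
    (p : MvPolynomial (Fin n) ℂ) :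
    DA A (aeval (linP Q) p) = aeval (linP Q) (DA B p) := by
  unfold DA
  rw [map_sum]
  have key : ∀ j, pderiv j (aeval (linP Q) p)
      = ∑ l, C (Q l j) * aeval (linP Q) (pderiv l p) :=
    fun j => pderiv_aeval_linear (linP Q) Q (fun l j => pderiv_linP Q l j) j p
  simp only [key, Finset.mul_sum, map_mul]
  rw [Finset.sum_comm]
  refine Finset.sum_congr rfl fun l _ => ?_
  rw [aeval_linP_linP, ← hQ]
  simp only [linP, Matrix.mul_apply, map_sum, C_mul, Finset.sum_mul, Finset.mul_sum]
  rw [Finset.sum_comm]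
  exact Finset.sum_congr rfl fun j _ => Finset.sum_congr rfl fun k _ => by ring

lemma coeff_pderiv (j : Fin n) (p : MvPolynomial (Fin n) ℂ) (b : Fin n →₀ ℕ) :
    coeff b (pderiv j p) = ((b j : ℂ) + 1) * coeff (b + Finsupp.single j 1) p := by
  classical
  induction p using MvPolynomial.induction_on' with
  | add p q hp hq => simp [hp, hq, mul_add]
  | monomial s a =>
    rw [pderiv_monomial, coeff_monomial, coeff_monomial]
    by_cases hs : s j = 0
    · have h1 : ¬ (s = b + Finsupp.single j 1) := by
        intro h; apply_fun (fun d => d j) at h; simp [hs] at h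
      rw [if_neg h1, mul_zero]
      split
      · simp [hs]
      · rfl
    · have hle : Finsupp.single j 1 ≤ s := by
        rw [Finsupp.single_le_iff]; omega
      have heq : s - Finsupp.single j 1 = b ↔ s = b + Finsupp.single j 1 := by
        constructor
        · intro h; rw [← h, tsub_add_cancel_of_le hle]
        · intro h; rw [h]; simp
      by_cases hb : s = b + Finsupp.single j 1
      · rw [if_pos (heq.2 hb), if_pos hb]
        have : s j = b j + 1 := by rw [hb]; simp
        rw [this]; push_cast; ring
      · rw [if_neg (fun h => hb (heq.1 h)), if_neg hb, mul_zero]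

lemma coeff_X_mul_pd (k j : Fin n) (p : MvPolynomial (Fin n) ℂ) (e : Fin n →₀ ℕ) :
    coeff e (X k * pderiv j p)
      = if e k = 0 then 0
        else ((((e - Finsupp.single k 1 : Fin n →₀ ℕ) j : ℕ) : ℂ) + 1)
          * coeff (e - Finsupp.single k 1 + Finsupp.single j 1) p := by
  classical
  rw [coeff_X_mul']
  by_cases h : e k = 0
  · rw [if_neg (by simp [Finsupp.mem_support_iff, h]), if_pos h]
  · rw [if_pos (by simp [Finsupp.mem_support_iff, h]), if_neg h, coeff_pderiv]

lemma coeff_DA (A : Matrix (Fin n) (Fin n) ℂ) (p : MvPolynomial (Fin n) ℂ) (e : Fin n →₀ ℕ) :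
    coeff e (DA A p) = ∑ j, ∑ k, A j k *
      (if e k = 0 then 0
        else ((((e - Finsupp.single k 1 : Fin n →₀ ℕ) j : ℕ) : ℂ) + 1)
          * coeff (e - Finsupp.single k 1 + Finsupp.single j 1) p) := by
  unfold DA
  rw [coeff_sum]
  refine Finset.sum_congr rfl fun j _ => ?_
  rw [linP, Finset.sum_mul]
  rw [coeff_sum]
  refine Finset.sum_congr rfl fun k _ => ?_
  rw [mul_assoc, coeff_C_mul, coeff_X_mul_pd]

lemma coeff_DA_diag (lam : Fin n → ℂ) (p : MvPolynomial (Fin n) ℂ) (e : Fin n →₀ ℕ) :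
    coeff e (DA (Matrix.diagonal lam) p) = (∑ j, (e j : ℂ) * lam j) * coeff e p := by
  classical
  rw [coeff_DA, Finset.sum_mul]
  refine Finset.sum_congr rfl fun j _ => ?_
  rw [Finset.sum_eq_single j]
  · rw [Matrix.diagonal_apply_eq]
    by_cases h : e j = 0
    · rw [if_pos h, h]; simp
    · rw [if_neg h]
      have h2 : e - Finsupp.single j 1 + Finsupp.single j 1 = e :=
        tsub_add_cancel_of_le (by rw [Finsupp.single_le_iff]; omega)
      rw [h2]
      have h3 : ((e - Finsupp.single j 1 : Fin n →₀ ℕ) j : ℕ) = e j - 1 := by simp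
      rw [h3]
      have h4 : ((e j - 1 : ℕ) : ℂ) + 1 = (e j : ℂ) := by
        have : (e j - 1) + 1 = e j := by omega
        calc ((e j - 1 : ℕ) : ℂ) + 1 = (((e j - 1) + 1 : ℕ) : ℂ) := by push_cast; ring
        _ = _ := by rw [this]
      rw [h4]; ring
  · intro k _ hk
    rw [Matrix.diagonal_apply_ne _ (Ne.symm hk), zero_mul]
  · simp

lemma DA_vanish (A : Matrix (Fin n) (Fin n) ℂ) (lam : Fin n → ℂ)
    (P : Matrix (Fin n) (Fin n) ℂ) (hP : IsUnit P.det)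
    (hPA : P⁻¹ * A * P = Matrix.diagonal lam)
    (hres : ∀ i : Fin n → ℕ, (∑ k : Fin n, (i k : ℂ) * lam k = 0) → ∀ k, i k = 0)
    (q : MvPolynomial (Fin n) ℂ) (hq : DA A q = 0) :
    ∀ d : Fin n →₀ ℕ, d ≠ 0 → coeff d q = 0 := by
  set Q := P⁻¹ with hQdef
  have hPQ : P * Q = 1 := Matrix.mul_nonsing_inv P hP
  have hQP : Q * P = 1 := Matrix.nonsing_inv_mul P hP
  have hcomm : Q * A = Matrix.diagonal lam * Q := by
    calc Q * A = Q * A * (P * Q) := by rw [hPQ, Matrix.mul_one]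
    _ = (Q * A * P) * Q := by noncomm_ring
    _ = Matrix.diagonal lam * Q := by rw [hPA]
  set p := aeval (linP P) q with hpdef
  have hqp : aeval (linP Q) p = q := by
    rw [hpdef, aeval_linP_comp, hPQ]
    have : linP (1 : Matrix (Fin n) (Fin n) ℂ) = (X : Fin n → MvPolynomial (Fin n) ℂ) :=
      _root_.funext linP_one
    rw [this]
    simp [aeval_X_left]
  have hDp : DA (Matrix.diagonal lam) p = 0 := by
    have h1 : aeval (linP Q) (DA (Matrix.diagonal lam) p) = 0 := by
      rw [← DA_conj A _ Q hcomm p, hqp, hq]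
    have hinj : Function.Injective (aeval (linP Q) : MvPolynomial (Fin n) ℂ → _) := by
      intro x y hxy
      have := congrArg (aeval (linP P)) hxy
      rwa [aeval_linP_comp, aeval_linP_comp, hQP,
        show linP (1 : Matrix (Fin n) (Fin n) ℂ) = (X : Fin n → MvPolynomial (Fin n) ℂ) from
          _root_.funext linP_one, show (aeval (X : Fin n → MvPolynomial (Fin n) ℂ)) x = x by simp [aeval_X_left],
        show (aeval (X : Fin n → MvPolynomial (Fin n) ℂ)) y = y by simp [aeval_X_left]] at this
    exact hinj (by rw [h1, map_zero])
  -- p has only constant coefficient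
  have hpc : ∀ d : Fin n →₀ ℕ, d ≠ 0 → coeff d p = 0 := by
    intro d hd
    have := congrArg (coeff d) hDp
    rw [coeff_DA_diag, coeff_zero] at this
    rcases mul_eq_zero.1 this with h | h
    · exfalso
      apply hd
      ext k
      exact hres (fun k => d k) h k
    · exact h
  have hpC : p = C (coeff 0 p) := by
    apply MvPolynomial.ext
    intro d
    by_cases hd : d = 0
    · subst hd; simp
    · rw [hpc d hd, coeff_C, if_neg (Ne.symm hd)]
  intro d hd
  rw [← hqp, hpC]
  rw [aeval_C]
  simp [algebraMap_eq, coeff_C, Ne.symm hd]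

lemma constCoeff_shift (z₀ : Fin n → ℂ) (p : MvPolynomial (Fin n) ℂ) :
    constantCoeff (aeval (fun k : Fin n => X k + C (z₀ k)) p) = eval z₀ p := by
  rw [aeval_def, eval₂_comp_left constantCoeff (algebraMap ℂ (MvPolynomial (Fin n) ℂ)) _ p]
  simp only [Function.comp_def, map_add, constantCoeff_X, constantCoeff_C, zero_add]
  have h : (constantCoeff).comp (algebraMap ℂ (MvPolynomial (Fin n) ℂ)) = RingHom.id ℂ := by
    ext a; simp [algebraMap_eq]
  rw [h]
  rfl

lemma coeff_single_eq_cc_pderiv (k : Fin n) (p : MvPolynomial (Fin n) ℂ) :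
    coeff (Finsupp.single k 1) p = coeff 0 (pderiv k p) := by
  classical
  induction p using MvPolynomial.induction_on' with
  | add p q hp hq => simp [hp, hq]
  | monomial s a =>
    rw [pderiv_monomial, coeff_monomial, coeff_monomial]
    by_cases h : s = Finsupp.single k 1
    · subst h
      rw [if_pos rfl, if_pos (by simp)]
      simp
    · rw [if_neg h]
      by_cases h2 : s - Finsupp.single k 1 = 0
      · rw [if_pos h2]
        have hsk : s k = 0 := by
          have hle : s ≤ Finsupp.single k 1 := tsub_eq_zero_iff_le.1 h2
          have h3 := Finsupp.le_def.1 hle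
          by_contra hne
          apply h
          ext l
          have := h3 l
          by_cases hl : l = k
          · subst hl
            simp only [Finsupp.single_eq_same] at this ⊢
            omega
          · have := h3 l
            rw [Finsupp.single_eq_of_ne' (Ne.symm hl)] at this ⊢
            omega
        simp [hsk]
      · rw [if_neg h2]

/-- total degree of an exponent -/
def fdeg {n : ℕ} (d : Fin n →₀ ℕ) : ℕ := ∑ k, d k

lemma fdeg_add (a b : Fin n →₀ ℕ) : fdeg (a + b) = fdeg a + fdeg b := by
  unfold fdeg
  rw [← Finset.sum_add_distrib]
  exact Finset.sum_congr rfl fun k _ => Finsupp.add_apply a b k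

lemma fdeg_single (j : Fin n) : fdeg (Finsupp.single j 1) = 1 := by
  classical
  unfold fdeg
  rw [Finset.sum_eq_single j]
  · simp
  · intro b _ hb; exact Finsupp.single_eq_of_ne' (Ne.symm hb)
  · simp

lemma fdeg_eq_zero {d : Fin n →₀ ℕ} (h : fdeg d = 0) : d = 0 := by
  ext k
  have := Finset.sum_eq_zero_iff.1 h k (Finset.mem_univ k)
  simpa using this

lemma fdeg_eq_one {a : Fin n →₀ ℕ} (h : fdeg a = 1) : ∃ k, a = Finsupp.single k 1 := by
  classical
  have hex : ∃ k, a k ≠ 0 := by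
    by_contra hc
    push_neg at hc
    have : a = 0 := by ext k; simp [hc k]
    rw [this] at h
    simp [fdeg] at h
  obtain ⟨k, hk⟩ := hex
  refine ⟨k, ?_⟩
  have hsum : a k + ∑ l ∈ Finset.univ.erase k, a l = 1 := by
    rw [Finset.add_sum_erase _ _ (Finset.mem_univ k)]; exact h
  have hak : a k = 1 := by
    have : ∑ l ∈ Finset.univ.erase k, a l = 0 ∨ a k ≤ 1 := by omega
    omega
  have hrest : ∑ l ∈ Finset.univ.erase k, a l = 0 := by omega
  ext l
  by_cases hl : l = k
  · subst hl; simp [hak]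
  · rw [Finsupp.single_eq_of_ne' (Ne.symm hl)]
    exact Finset.sum_eq_zero_iff.1 hrest l (Finset.mem_erase.2 ⟨hl, Finset.mem_univ l⟩)

lemma fdeg_sub_add (e : Fin n →₀ ℕ) (k : Fin n) (hk : e k ≠ 0) :
    (e - Finsupp.single k 1) + Finsupp.single k 1 = e :=
  tsub_add_cancel_of_le (by rw [Finsupp.single_le_iff]; omega)

/-- Formal partial derivative `∂ⱼ` on multivariate formal power series:
the coefficient of `xᵈ` in `∂ⱼ G` is `(dⱼ + 1) · (coefficient of `x^{d + eⱼ}` in `G`). -/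
noncomputable def psPderiv {n : ℕ} (j : Fin n) (G : MvPowerSeries (Fin n) ℂ) :
    MvPowerSeries (Fin n) ℂ :=
  fun d => ((d j : ℂ) + 1) * MvPowerSeries.coeff (d + Finsupp.single j 1) G

theorem stmt_15 {n : ℕ} (F : Fin n → MvPolynomial (Fin n) ℂ) (z₀ : Fin n → ℂ)
    (heq : ∀ j, MvPolynomial.eval z₀ (F j) = 0)
    (A : Matrix (Fin n) (Fin n) ℂ)
    (hA : ∀ j k, A j k = MvPolynomial.eval z₀ (MvPolynomial.pderiv k (F j)))
    (lam : Fin n → ℂ)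
    (hdiag : ∃ P : Matrix (Fin n) (Fin n) ℂ,
      IsUnit P.det ∧ P⁻¹ * A * P = Matrix.diagonal lam)
    (hres : ∀ i : Fin n → ℕ, (∑ k : Fin n, (i k : ℂ) * lam k = 0) →
      ∀ k, i k = 0)
    (G : MvPowerSeries (Fin n) ℂ)
    (hint : ∑ j : Fin n,
      ((MvPolynomial.aeval (fun k : Fin n => MvPolynomial.X k + MvPolynomial.C (z₀ k))
          (F j)).toMvPowerSeries) * psPderiv j G = 0) :
    ∀ d : Fin n →₀ ℕ, d ≠ 0 → MvPowerSeries.coeff d G = 0 := by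
  classical
  obtain ⟨P, hP, hPA⟩ := hdiag
  have hcc : ∀ q : MvPolynomial (Fin n) ℂ, coeff 0 q = constantCoeff q := fun q => rfl
  set f : Fin n → MvPolynomial (Fin n) ℂ := fun k => X k + C (z₀ k) with hfdef
  have hf1 : ∀ l j, pderiv j (f l) = C ((1 : Matrix (Fin n) (Fin n) ℂ) l j) := by
    intro l j
    simp only [hfdef, map_add, pderiv_C, add_zero, Matrix.one_apply]
    rw [pderiv_X]
    by_cases h : l = j
    · subst h; simp
    · rw [Pi.single_eq_of_ne h, if_neg h, map_zero]
  have fact0 : ∀ j, coeff 0 (aeval f (F j)) = 0 := by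
    intro j
    rw [hcc, constCoeff_shift, heq]
  have fact1 : ∀ j k, coeff (Finsupp.single k 1) (aeval f (F j)) = A j k := by
    intro j k
    rw [coeff_single_eq_cc_pderiv, pderiv_aeval_linear f 1 hf1 k (F j), coeff_sum]
    simp only [coeff_C_mul]
    rw [Finset.sum_eq_single k]
    · rw [Matrix.one_apply_eq, one_mul, hcc, constCoeff_shift, hA]
    · intro b _ hb
      rw [Matrix.one_apply_ne hb, zero_mul]
    · simp
  have hPDE : ∀ e : Fin n →₀ ℕ, (∑ j : Fin n, ∑ ab ∈ Finset.HasAntidiagonal.antidiagonal e,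
      coeff ab.1 (aeval f (F j)) *
        ((((ab.2 j : ℕ) : ℂ) + 1) *
          MvPowerSeries.coeff (ab.2 + Finsupp.single j 1) G)) = 0 := by
    intro e
    have h0 := congrArg (MvPowerSeries.coeff e) hint
    rw [map_sum, map_zero] at h0
    rw [← h0]
    refine Finset.sum_congr rfl fun j _ => ?_
    rw [MvPowerSeries.coeff_mul]
    refine Finset.sum_congr rfl fun ab _ => ?_
    rw [MvPolynomial.coeff_coe]
    rfl
  suffices H : ∀ m : ℕ, ∀ d : Fin n →₀ ℕ, fdeg d = m → d ≠ 0 →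
      MvPowerSeries.coeff d G = 0 by
    intro d hd
    exact H (fdeg d) d rfl hd
  intro m
  induction m using Nat.strong_induction_on with
  | _ m IH =>
  intro d hdm hd0
  set Dm : Finset (Fin n →₀ ℕ) :=
    (Finset.Iic (Finsupp.equivFunOnFinite.symm fun _ => m)).filter (fun e => fdeg e = m)
    with hDmdef
  have hDm : ∀ e : Fin n →₀ ℕ, e ∈ Dm ↔ fdeg e = m := by
    intro e
    simp only [hDmdef, Finset.mem_filter, Finset.mem_Iic]
    constructor
    · exact fun h => h.2
    · intro h
      refine ⟨?_, h⟩
      rw [Finsupp.le_def]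
      intro i
      have h2 : e i ≤ fdeg e := Finset.single_le_sum (fun k _ => Nat.zero_le _) (Finset.mem_univ i)
      simpa [Finsupp.equivFunOnFinite] using le_trans h2 (le_of_eq h)
  set p : MvPolynomial (Fin n) ℂ := ∑ e ∈ Dm, monomial e (MvPowerSeries.coeff e G)
    with hpdef
  have hp : ∀ e : Fin n →₀ ℕ,
      coeff e p = if fdeg e = m then MvPowerSeries.coeff e G else 0 := by
    intro e
    rw [hpdef, coeff_sum]
    simp only [coeff_monomial]
    rw [Finset.sum_ite_eq' Dm e (fun s => MvPowerSeries.coeff s G)]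
    congr 1
    · exact propext (hDm e)
  have hdegmove : ∀ (e : Fin n →₀ ℕ) (k j : Fin n), e k ≠ 0 →
      fdeg (e - Finsupp.single k 1 + Finsupp.single j 1) = fdeg e := by
    intro e k j hk
    have h1 : fdeg (e - Finsupp.single k 1) + 1 = fdeg e := by
      conv_rhs => rw [← fdeg_sub_add e k hk]
      rw [fdeg_add, fdeg_single]
    rw [fdeg_add, fdeg_single]
    omega
  have hDAp : DA A p = 0 := by
    apply MvPolynomial.ext
    intro e
    rw [coeff_zero, coeff_DA]
    by_cases he : fdeg e = m
    · -- rewrite coeff p into G, then compare with hPDE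
      have hstep : ∀ j k : Fin n, (A j k *
          (if e k = 0 then 0 else
            ((((e - Finsupp.single k 1 : Fin n →₀ ℕ) j : ℕ) : ℂ) + 1)
              * coeff (e - Finsupp.single k 1 + Finsupp.single j 1) p))
          = A j k * (if e k = 0 then 0 else
            ((((e - Finsupp.single k 1 : Fin n →₀ ℕ) j : ℕ) : ℂ) + 1)
              * MvPowerSeries.coeff (e - Finsupp.single k 1 + Finsupp.single j 1) G) := by
        intro j k
        by_cases hk : e k = 0
        · rw [if_pos hk, if_pos hk]
        · rw [if_neg hk, if_neg hk, hp, if_pos (by rw [hdegmove e k j hk]; exact he)]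
      simp only [hstep]
      -- now show the double sum equals the PDE sum
      refine Eq.trans ?_ (hPDE e)
      refine Finset.sum_congr rfl fun j _ => ?_
      -- inner identity
      set T : Finset (Fin n) := Finset.univ.filter (fun k => e k ≠ 0) with hTdef
      set g : Fin n → (Fin n →₀ ℕ) × (Fin n →₀ ℕ) :=
        fun k => (Finsupp.single k 1, e - Finsupp.single k 1) with hgdef
      have hsub : T.image g ⊆ Finset.HasAntidiagonal.antidiagonal e := by
        intro x hx
        obtain ⟨k, hkT, rfl⟩ := Finset.mem_image.1 hx
        rw [Finset.HasAntidiagonal.mem_antidiagonal]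
        have hk : e k ≠ 0 := (Finset.mem_filter.1 hkT).2
        rw [hgdef]
        exact (add_comm _ _).trans (fdeg_sub_add e k hk)
      have hzero : ∀ ab ∈ Finset.HasAntidiagonal.antidiagonal e, ab ∉ T.image g →
          coeff ab.1 (aeval f (F j)) *
            ((((ab.2 j : ℕ) : ℂ) + 1) *
              MvPowerSeries.coeff (ab.2 + Finsupp.single j 1) G) = 0 := by
        intro ab hab hnot
        rw [Finset.HasAntidiagonal.mem_antidiagonal] at hab
        by_cases h0 : ab.1 = 0
        · rw [h0, fact0, zero_mul]
        by_cases h1 : fdeg ab.1 = 1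
        · exfalso
          obtain ⟨k, hk⟩ := fdeg_eq_one h1
          have hek : e k ≠ 0 := by
            have := congrArg (fun q : Fin n →₀ ℕ => q k) hab
            simp only [Finsupp.add_apply, hk, Finsupp.single_eq_same] at this
            omega
          apply hnot
          rw [Finset.mem_image]
          refine ⟨k, Finset.mem_filter.2 ⟨Finset.mem_univ k, hek⟩, ?_⟩
          rw [hgdef]
          have hab2 : ab.2 = e - Finsupp.single k 1 := by
            ext l
            have hthis := congrArg (fun q : Fin n →₀ ℕ => q l) hab
            rw [hk] at hthis
            simp only [Finsupp.add_apply, Finsupp.single_apply] at hthis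
            simp only [Finsupp.tsub_apply, Finsupp.single_apply]
            by_cases hkl : k = l <;> simp [hkl] at hthis ⊢ <;> omega
          exact Prod.ext (hk.symm) (hab2.symm)
        · -- fdeg ab.1 ≥ 2
          have h2 : 2 ≤ fdeg ab.1 := by
            rcases hcase : fdeg ab.1 with _ | nn
            · exact absurd (fdeg_eq_zero hcase) h0
            · rcases nn with _ | nn
              · exact absurd hcase h1
              · omega
          have hm : fdeg ab.1 + fdeg ab.2 = m := by
            rw [← fdeg_add, hab, he]
          have hlt : fdeg (ab.2 + Finsupp.single j 1) < m := by
            rw [fdeg_add, fdeg_single]; omega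
          have hne : ab.2 + Finsupp.single j 1 ≠ 0 := by
            intro hz
            have := congrArg fdeg hz
            rw [fdeg_add, fdeg_single] at this
            simp [fdeg] at this
          rw [IH _ hlt _ rfl hne, mul_zero, mul_zero]
      have hginj : Set.InjOn g T := by
        intro k _ k' _ hkk
        have := congrArg Prod.fst hkk
        simp only [hgdef] at this
        by_contra hne
        have := congrArg (fun q : Fin n →₀ ℕ => q k) this
        simp only [Finsupp.single_eq_same, Finsupp.single_eq_of_ne' (Ne.symm hne)] at this
        exact one_ne_zero this
      rw [← Finset.sum_subset hsub hzero, Finset.sum_image (fun x hx y hy h => hginj hx hy h)]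
      -- now sum over T
      rw [hTdef, Finset.sum_filter]
      refine Finset.sum_congr rfl fun k _ => ?_
      by_cases hk : e k = 0
      · rw [if_pos hk, mul_zero, if_neg (by simpa using hk)]
      · rw [if_neg hk, if_pos hk, hgdef]
        simp only [fact1]
    · apply Finset.sum_eq_zero
      intro j _
      apply Finset.sum_eq_zero
      intro k _
      by_cases hk : e k = 0
      · rw [if_pos hk, mul_zero]
      · rw [if_neg hk, hp, if_neg (by rw [hdegmove e k j hk]; exact he), mul_zero, mul_zero]
  have hfinal := DA_vanish A lam P hP hPA hres p hDAp d hd0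
  rwa [hp, if_pos hdm] at hfinal
end
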